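/- arXiv:1603.08186 — 6 statements merged into one kernel-verified Lean document; each statement's English description precedes it below -/
import Mathlib

section
/- In a quasi-pointed finitely complete category, given an internal equivalence relation (R, r₁, r₂) on an object X, if k : K → R is the kernel of r₁, then the composite r₂ ∘ k : K → X is Bourn-normal to R. -/
open CategoryTheory CategoryTheory.Limits

universe v u

/-- `n : N ⟶ X` is a kernel of `f : X ⟶ Y`: it is a pullback of the
initial arrow `0 ⟶ Y` along `f`. -/
def IsKernelOf {C : Type u} [Category.{v} C] [HasInitial C] {N X Y : C}
    (n : N ⟶ X) (f : X ⟶ Y) : Prop :=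
  ∃ ω : N ⟶ ⊥_ C, IsPullback ω n (initial.to Y) f

/-- `n : N ⟶ X` is Bourn-normal to the relation `(R, r1, r2)` on `X`:
`n × n` factors through `⟨r₁,r₂⟩` via `nt`, and both the square comparing `nt` with
`⟨r₁,r₂⟩` over `n × n` and the square comparing `nt` with `r₁` over `n` are pullbacks. -/
def IsBournNormalTo {C : Type u} [Category.{v} C] [HasFiniteLimits C] {N X R : C}
    (n : N ⟶ X) (r1 r2 : R ⟶ X) : Prop :=
  ∃ nt : N ⨯ N ⟶ R,
    IsPullback nt (𝟙 (N ⨯ N)) (prod.lift r1 r2) (prod.map n n) ∧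
    IsPullback nt prod.fst r1 n
/-- An internal equivalence relation on an object `X` of a finitely complete category. -/
structure InternalEqRel (C : Type u) [Category.{v} C] [HasFiniteLimits C] (X : C) where
  R : C
  r1 : R ⟶ X
  r2 : R ⟶ X
  rel_mono : Mono (prod.lift r1 r2)
  rfl' : X ⟶ R
  rfl_r1 : rfl' ≫ r1 = 𝟙 X
  rfl_r2 : rfl' ≫ r2 = 𝟙 X
  symm : R ⟶ R
  symm_r1 : symm ≫ r1 = r2
  symm_r2 : symm ≫ r2 = r1
  htrans : pullback r2 r1 ⟶ R
  htrans_r1 : htrans ≫ r1 = pullback.fst r2 r1 ≫ r1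
  htrans_r2 : htrans ≫ r2 = pullback.snd r2 r1 ≫ r2

/-!
Since `0 → 1` is mono, every object has at most one map to `0`; so all generalized elements of
the kernel `K` of `r₁` are relations `0 ~ y` with the same first leg, and `k` is mono. Writing
`n = r₂ ∘ k`, symmetry and transitivity turn `n a ~ 0 ~ n b` into a map `K × K → R` relating
`n a` to `n b`; the first square is a pullback because `⟨r₁, r₂⟩` is mono. For the second, a
relation `n a ~ y` composed with `0 ~ n a` is a relation `0 ~ y`, i.e. an element `b` of `K`,
and it is the only one with `n b = y` because `k` and `⟨r₁, r₂⟩` are mono.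
-/

theorem subsingleton_hom_initial_of_mono_initial_to_terminal {C : Type u} [Category.{v} C]
    [HasInitial C] [HasTerminal C] (h : Mono (initial.to (⊤_ C))) (A : C) :
    Subsingleton (A ⟶ ⊥_ C) :=
  ⟨fun _ _ => (cancel_mono (initial.to (⊤_ C))).1 (Subsingleton.elim _ _)⟩

namespace IsKernelOf

variable {C : Type u} [Category.{v} C] [HasInitial C] (h0 : ∀ A : C, Subsingleton (A ⟶ ⊥_ C))
  {N X Y : C} {n : N ⟶ X} {f : X ⟶ Y}
include h0

theorem mono (hn : IsKernelOf n f) : Mono n := by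
  obtain ⟨ω, hω⟩ := hn
  exact ⟨fun a b hab => hω.hom_ext ((h0 _).elim _ _) hab⟩

theorem comp_eq_comp (hn : IsKernelOf n f) {A : C} (a b : A ⟶ N) :
    a ≫ n ≫ f = b ≫ n ≫ f := by
  obtain ⟨ω, hω⟩ := hn
  rw [← hω.w, ← Category.assoc, ← Category.assoc, (h0 _).elim (a ≫ ω) (b ≫ ω)]

omit h0 in
theorem exists_lift (hn : IsKernelOf n f) {A : C} (a : A ⟶ N) {g : A ⟶ X}
    (hg : g ≫ f = a ≫ n ≫ f) : ∃ l : A ⟶ N, l ≫ n = g := by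
  obtain ⟨ω, hω⟩ := hn
  exact ⟨hω.lift (a ≫ ω) g (by rw [hg, Category.assoc, hω.w]), hω.lift_snd _ _ _⟩

end IsKernelOf

namespace InternalEqRel

variable {C : Type u} [Category.{v} C] [HasFiniteLimits C] {X : C} (E : InternalEqRel C X)

theorem hom_ext {A : C} {f g : A ⟶ E.R} (h1 : f ≫ E.r1 = g ≫ E.r1)
    (h2 : f ≫ E.r2 = g ≫ E.r2) : f = g := by
  have := E.rel_mono
  refine (cancel_mono (prod.lift E.r1 E.r2)).1 (prod.hom_ext ?_ ?_)
  · simpa only [Category.assoc, prod.lift_fst] using h1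
  · simpa only [Category.assoc, prod.lift_snd] using h2

noncomputable def trans {A : C} (f g : A ⟶ E.R) (h : f ≫ E.r2 = g ≫ E.r1) : A ⟶ E.R :=
  pullback.lift f g h ≫ E.htrans

@[simp]
theorem trans_r1 {A : C} (f g : A ⟶ E.R) (h : f ≫ E.r2 = g ≫ E.r1) :
    E.trans f g h ≫ E.r1 = f ≫ E.r1 := by
  rw [trans, Category.assoc, E.htrans_r1, pullback.lift_fst_assoc]

@[simp]
theorem trans_r2 {A : C} (f g : A ⟶ E.R) (h : f ≫ E.r2 = g ≫ E.r1) :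
    E.trans f g h ≫ E.r2 = g ≫ E.r2 := by
  rw [trans, Category.assoc, E.htrans_r2, pullback.lift_snd_assoc]

variable {K : C} {k : K ⟶ E.R} (hconst : prod.fst ≫ k ≫ E.r1 = prod.snd ≫ k ≫ E.r1)

noncomputable def connect : K ⨯ K ⟶ E.R :=
  E.trans (prod.fst ≫ k ≫ E.symm) (prod.snd ≫ k) (by simpa [E.symm_r2] using hconst)

@[simp]
theorem connect_r1 : E.connect hconst ≫ E.r1 = prod.fst ≫ k ≫ E.r2 := by
  simp [connect, E.symm_r1]

@[simp]
theorem connect_r2 : E.connect hconst ≫ E.r2 = prod.snd ≫ k ≫ E.r2 := by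
  simp [connect]

theorem isPullback_connect_prodLift :
    IsPullback (E.connect hconst) (𝟙 (K ⨯ K)) (prod.lift E.r1 E.r2)
      (prod.map (k ≫ E.r2) (k ≫ E.r2)) := by
  have := E.rel_mono
  exact IsPullback.of_vert_isIso_mono ⟨by ext <;> simp⟩

theorem isPullback_connect_fst [HasInitial C] (h0 : ∀ A : C, Subsingleton (A ⟶ ⊥_ C))
    (hker : IsKernelOf k E.r1) :
    IsPullback (E.connect hconst) prod.fst E.r1 (k ≫ E.r2) := by
  have := hker.mono h0
  -- composing `k a : 0 ~ n a` with a cone's `ρ : n a ~ y` gives `0 ~ y`, a kernel element `b`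
  have hlift : ∀ s : PullbackCone E.r1 (k ≫ E.r2), ∃ b : s.pt ⟶ K,
      b ≫ k = E.trans (s.snd ≫ k) s.fst (by rw [Category.assoc, s.condition]) :=
    fun s => hker.exists_lift s.snd (by rw [trans_r1, Category.assoc])
  choose b hb using hlift
  have hb_r2 (s : PullbackCone E.r1 (k ≫ E.r2)) : b s ≫ k ≫ E.r2 = s.fst ≫ E.r2 := by
    rw [← Category.assoc, hb, trans_r2]
  refine IsPullback.of_isLimit (PullbackCone.IsLimit.mk (E.connect_r1 hconst)
    (fun s => prod.lift s.snd (b s)) (fun s => E.hom_ext ?_ ?_) (fun s => prod.lift_fst _ _) ?_)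
  · simpa only [Category.assoc, connect_r1, prod.lift_fst_assoc] using s.condition.symm
  · simp only [Category.assoc, connect_r2, prod.lift_snd_assoc, hb_r2]
  · intro s m hm_connect hm_fst
    refine prod.hom_ext (by rw [hm_fst, prod.lift_fst]) ?_
    rw [prod.lift_snd, ← cancel_mono k]
    refine E.hom_ext ?_ ?_
    · simpa only [Category.assoc] using hker.comp_eq_comp h0 (m ≫ prod.snd) (b s)
    · rw [Category.assoc, Category.assoc, Category.assoc, hb_r2, ← connect_r2 E hconst,
        ← Category.assoc, hm_connect]

end InternalEqRel

/-- In a quasi-pointed finitely complete category, given an internal equivalence relation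
`(R, r₁, r₂)` on `X`, if `k` is the kernel of `r₁`, then `r₂ ∘ k` is Bourn-normal
to the relation. -/
theorem normalization_is_bournNormal {C : Type u} [Category.{v} C]
    [HasFiniteLimits C] [HasInitial C]
    (hqp : Mono (initial.to (⊤_ C)))
    {X K : C} (E : InternalEqRel C X) (k : K ⟶ E.R) (hk : IsKernelOf k E.r1) :
    IsBournNormalTo (k ≫ E.r2) E.r1 E.r2 := by
  have h0 := subsingleton_hom_initial_of_mono_initial_to_terminal hqp
  have hconst := hk.comp_eq_comp h0 prod.fst prod.snd
  exact ⟨E.connect hconst, E.isPullback_connect_prodLift hconst,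
    E.isPullback_connect_fst hconst h0 hk⟩
end

section
/- In a quasi-pointed finitely complete category, if n : N → X is Bourn-normal to the kernel pair equivalence relation of a morphism f : X → Y, then ker(f) ≤ n as subobjects of X; more precisely, the composite n ∘ k equals ker(f), where k : K → N is the kernel of the terminal map N → 1. -/
open CategoryTheory CategoryTheory.Limits

universe v u

/-!
Write `r₁, r₂` for the kernel pair of `f` and `nt : N ⨯ N ⟶ R` for the normality witness.
Bourn-normality exhibits `N ⨯ N` as the pullback of `r₁` along `n`; pulling back further along
`0 ⟶ N` gives `0 ⨯ N ≅ K`, so `K` is the pullback of `r₁` along `0 ⟶ X`. Pasting that square with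
the kernel pair square shows that `K ⟶ R ⟶ X` through `r₂` is a kernel of `f`, and this composite
is `k ≫ n` because `nt ≫ r₂ = snd ≫ n`.
-/

variable {C : Type u} [Category.{v} C]

lemma CategoryTheory.IsPullback.prod_lift_fst_of_terminal [HasTerminal C] [HasBinaryProducts C]
    {P A B X : C} {a : P ⟶ A} {x : P ⟶ X} (h : IsPullback a x (terminal.from A) (terminal.from X))
    (g : A ⟶ B) : IsPullback (prod.lift (a ≫ g) x) a prod.fst g := by
  have hw : prod.lift (a ≫ g) x ≫ prod.fst = a ≫ g := prod.lift_fst _ _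
  refine (IsPullback.paste_horiz_iff (IsPullback.of_hasBinaryProduct' B X).flip hw).mp ?_
  rw [prod.lift_snd, terminal.comp_from]
  exact h.flip

lemma isKernelOf_comp_of_isPullback [HasInitial C] {P R X Y : C} {f : X ⟶ Y}
    {r1 r2 : R ⟶ X} (hR : IsPullback r1 r2 f f) {p : P ⟶ R} {ω : P ⟶ ⊥_ C}
    (h : IsPullback p ω r1 (initial.to X)) : IsKernelOf (p ≫ r2) f :=
  ⟨ω, by simpa using (h.paste_horiz hR.flip).flip⟩

theorem ker_le_of_bournNormal_to_kernelPair_general {C : Type u} [Category.{v} C]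
    [HasFiniteLimits C] [HasInitial C]
    {N X Y K : C} (f : X ⟶ Y) (n : N ⟶ X)
    (hn : IsBournNormalTo n (pullback.fst f f) (pullback.snd f f))
    (k : K ⟶ N) (hk : IsKernelOf k (terminal.from N)) :
    IsKernelOf (k ≫ n) f := by
  obtain ⟨nt, hnt, hfst⟩ := hn
  obtain ⟨ω, hω⟩ := hk
  have hsnd : nt ≫ pullback.snd f f = prod.snd ≫ n := by
    have := hnt.w =≫ prod.snd
    rwa [Category.assoc, Category.id_comp, prod.map_snd, prod.lift_snd] at this
  have hK : IsPullback ω k (terminal.from _) (terminal.from N) := by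
    rwa [Subsingleton.elim (terminal.from (⊥_ C)) (initial.to _)]
  have hr1 := (hK.prod_lift_fst_of_terminal (initial.to N)).paste_horiz hfst
  rw [initial.to_comp] at hr1
  have hker := isKernelOf_comp_of_isPullback (IsPullback.of_hasPullback f f) hr1
  rwa [Category.assoc, hsnd, prod.lift_snd_assoc] at hker

/-- In a quasi-pointed finitely complete category, if `n : N ⟶ X` is Bourn-normal to the
kernel pair of `f : X ⟶ Y`, and `k : K ⟶ N` is the kernel of the terminal map `N ⟶ 1`,
then the composite `n ∘ k` is a kernel of `f` (so `ker f ≤ n` as subobjects of `X`). -/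
theorem ker_le_of_bournNormal_to_kernelPair {C : Type u} [Category.{v} C]
    [HasFiniteLimits C] [HasInitial C]
    (hqp : Mono (initial.to (⊤_ C)))
    {N X Y K : C} (f : X ⟶ Y) (n : N ⟶ X)
    (hn : IsBournNormalTo n (pullback.fst f f) (pullback.snd f f))
    (k : K ⟶ N) (hk : IsKernelOf k (terminal.from N)) :
    IsKernelOf (k ≫ n) f :=
  ker_le_of_bournNormal_to_kernelPair_general f n hn k hk
end

section
/- In a quasi-pointed finitely complete category, if n : N → X is Bourn-normal to an equivalence relation R on X, then the normalization Nor(R) = r₂ ∘ ker(r₁) of R equals n ∘ k as a subobject of X, where k is the kernel of the terminal map N → 1. -/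
open CategoryTheory CategoryTheory.Limits

universe v u

/-!
Both subobjects are identified with `0 × N ⟶ N ⟶ X`. The kernel of `N ⟶ 1` is a pullback over
the terminal object, hence the product `0 × N` with its second projection. The kernel of `r₁`
is the pullback of `0 ⟶ N ⟶ X` along `r₁`; since `(nt, fst)` is a pullback of `r₁` along `n`,
pasting shows it is the pullback of `0 ⟶ N` along `fst : N × N ⟶ N`, namely `0 × N`, included
in `R` by `nt ∘ (0 × 1)`. Finally `r₂ ∘ nt = n ∘ snd`.
-/

namespace IsKernelOf

variable {C : Type u} [Category.{v} C] [HasInitial C]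

theorem exists_iso {A B X Y : C} {a : A ⟶ X} {b : B ⟶ X} {f : X ⟶ Y}
    (ha : IsKernelOf a f) (hb : IsKernelOf b f) : ∃ i : A ≅ B, i.hom ≫ b = a := by
  obtain ⟨_, ha⟩ := ha
  obtain ⟨_, hb⟩ := hb
  exact ⟨ha.flip.isoIsPullback _ _ hb.flip, IsPullback.isoIsPullback_hom_fst ..⟩

variable [HasBinaryProducts C]

theorem prodMap_comp_of_isPullback {N M R X : C} {g : N ⨯ M ⟶ R} {r : R ⟶ X} {n : N ⟶ X}
    (h : IsPullback g prod.fst r n) :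
    IsKernelOf (prod.map (initial.to N) (𝟙 M) ≫ g) r :=
  ⟨prod.fst, by
    simpa only [initial.to_comp] using
      ((IsPullback.of_prod_fst_with_id (initial.to N) M).flip.paste_horiz h).flip⟩

theorem prod_snd [HasTerminal C] (N : C) :
    IsKernelOf (prod.snd : (⊥_ C) ⨯ N ⟶ N) (terminal.from N) :=
  ⟨prod.fst, by simpa only [Subsingleton.elim (terminal.from (⊥_ C)) (initial.to (⊤_ C))]
    using IsPullback.of_hasBinaryProduct' (⊥_ C) N⟩

end IsKernelOf

theorem normalization_eq_comp_kernel_general {C : Type u} [Category.{v} C]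
    [HasFiniteLimits C] [HasInitial C]
    {N X K K' : C} (E : InternalEqRel C X) (n : N ⟶ X)
    (hn : IsBournNormalTo n E.r1 E.r2)
    (k : K ⟶ N) (hk : IsKernelOf k (terminal.from N))
    (k' : K' ⟶ E.R) (hk' : IsKernelOf k' E.r1) :
    ∃ i : K ≅ K', i.hom ≫ (k' ≫ E.r2) = k ≫ n := by
  obtain ⟨nt, hnt, hnt_fst⟩ := hn
  obtain ⟨i, hi⟩ := hk.exists_iso (IsKernelOf.prod_snd N)
  obtain ⟨j, hj⟩ := (IsKernelOf.prodMap_comp_of_isPullback hnt_fst).exists_iso hk'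
  have hnt_r2 : nt ≫ E.r2 = prod.snd ≫ n := by
    simpa only [Category.assoc, prod.lift_snd, Category.id_comp, prod.map_snd] using
      hnt.w =≫ prod.snd
  refine ⟨i ≪≫ j, ?_⟩
  simp [reassoc_of% hj, hnt_r2, ← hi]

/-- In a quasi-pointed finitely complete category, if `n : N ⟶ X` is Bourn-normal to an
equivalence relation `E` on `X`, then the normalization `Nor(E) = r₂ ∘ ker r₁` of `E`
equals `n ∘ k` as a subobject of `X`, where `k` is the kernel of `N ⟶ 1`. -/
theorem normalization_eq_comp_kernel {C : Type u} [Category.{v} C]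
    [HasFiniteLimits C] [HasInitial C]
    (hqp : Mono (initial.to (⊤_ C)))
    {N X K K' : C} (E : InternalEqRel C X) (n : N ⟶ X)
    (hn : IsBournNormalTo n E.r1 E.r2)
    (k : K ⟶ N) (hk : IsKernelOf k (terminal.from N))
    (k' : K' ⟶ E.R) (hk' : IsKernelOf k' E.r1) :
    ∃ i : K ≅ K', i.hom ≫ (k' ≫ E.r2) = k ≫ n :=
  normalization_eq_comp_kernel_general E n hn k hk k' hk'
end

section
/- In a quasi-pointed finitely complete category, if n : N → X is Bourn-normal to an equivalence relation R and the object N has null support (i.e., there exists a morphism N → 0), then n is isomorphic as a subobject of X to the normalization Nor(R) = r₂ ∘ ker(r₁). -/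
open CategoryTheory CategoryTheory.Limits

universe v u

/-! A Bourn-normal `n` makes `N × N ⟶ N` (first projection) a pullback of `r₁` along `n`.
Pulling back further along `0 ⟶ N` gives `0 × N`, which is `N` itself once `N` has null support,
because `0` is subterminal in a quasi-pointed category. Hence `N` is a kernel of `r₁`, and kernels
are unique up to isomorphism; the second projection turns `r₂` into `n`. -/

section

variable {C : Type u} [Category.{v} C]

lemma isSubterminal_of_mono_to_terminal [HasTerminal C] {A : C} (f : A ⟶ ⊤_ C) (hf : Mono f) :
    IsSubterminal A :=
  fun _ _ _ => (cancel_mono f).1 (Subsingleton.elim _ _)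

lemma isPullback_prod_lift_of_isSubterminal {Z A N : C} [HasBinaryProduct A N]
    (hZ : IsSubterminal Z) (a : Z ⟶ A) (ω : N ⟶ Z) :
    IsPullback ω (prod.lift (ω ≫ a) (𝟙 N)) a prod.fst := by
  refine IsPullback.mk' (by simp [prod.lift_fst]) (fun _ φ φ' _ h => ?_)
    (fun _ s t w => ⟨t ≫ prod.snd, hZ _ _, ?_⟩)
  · simpa [prod.lift_snd] using h =≫ prod.snd
  · ext
    · simp only [Category.assoc, prod.lift_fst, ← w, ← hZ (t ≫ prod.snd ≫ ω) s]
    · simp [prod.lift_snd]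

lemma IsBournNormalTo.exists_isPullback_initial [HasFiniteLimits C] [HasInitial C]
    (h0 : IsSubterminal (⊥_ C)) {N X R : C} {n : N ⟶ X} {r1 r2 : R ⟶ X}
    (hn : IsBournNormalTo n r1 r2) (ω : N ⟶ ⊥_ C) :
    ∃ m : N ⟶ R, IsPullback ω m (initial.to X) r1 ∧ m ≫ r2 = n := by
  obtain ⟨nt, hpair, hfst⟩ := hn
  have nt_r2 : nt ≫ r2 = prod.snd ≫ n := by simpa [prod.lift_snd] using hpair.w =≫ prod.snd
  refine ⟨prod.lift (ω ≫ initial.to N) (𝟙 N) ≫ nt, ?_, by simp [nt_r2, prod.lift_snd_assoc]⟩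
  simpa using (isPullback_prod_lift_of_isSubterminal h0 (initial.to N) ω).paste_vert hfst.flip

end

/-- In a quasi-pointed finitely complete category, if `n : N ⟶ X` is Bourn-normal to an
equivalence relation `E` and `N` has null support (it admits a morphism to `0`), then
`n` is isomorphic, as a subobject of `X`, to the normalization `r₂ ∘ ker r₁` of `E`. -/
theorem bournNormal_nullSupport_iso_normalization {C : Type u} [Category.{v} C]
    [HasFiniteLimits C] [HasInitial C]
    (hqp : Mono (initial.to (⊤_ C)))
    {N X K' : C} (E : InternalEqRel C X) (n : N ⟶ X)
    (hn : IsBournNormalTo n E.r1 E.r2)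
    (hns : Nonempty (N ⟶ ⊥_ C))
    (k' : K' ⟶ E.R) (hk' : IsKernelOf k' E.r1) :
    ∃ i : K' ≅ N, i.hom ≫ n = k' ≫ E.r2 := by
  obtain ⟨ω⟩ := hns
  obtain ⟨m, hm, hm_r2⟩ :=
    hn.exists_isPullback_initial (isSubterminal_of_mono_to_terminal _ hqp) ω
  obtain ⟨ω', hk'⟩ := hk'
  refine ⟨hk'.isoIsPullback _ _ hm, ?_⟩
  rw [← hm_r2, ← Category.assoc, IsPullback.isoIsPullback_hom_snd]
end

section
/- In a quasi-pointed finitely complete category, two morphisms with null-support domain that are both Bourn-normal to the same equivalence relation R are isomorphic as subobjects; i.e., the Bourn-normal monomorphism in N₀(C) associated to a given equivalence relation is essentially unique. -/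
/-!
In terms of generalized elements, a morphism `n : N ⟶ X` Bourn-normal to `R` is a single
`R`-class: any two elements of `N` are related, and whatever is related to an element of `N` lies
in `N`. A null support `N ⟶ ⊥_ C` makes the zero element `N ⟶ ⊥_ C ⟶ X` an element of `N` and, as
it factors through every subobject, also of `N'`; so all of `N` is related to an element of `N'`
and lies in `N'`. By symmetry, and since Bourn-normal morphisms are mono, `N` and `N'` are the
same subobject.
-/

open CategoryTheory CategoryTheory.Limits

universe v u

namespace IsBournNormalTo

variable {C : Type u} [Category.{v} C] [HasFiniteLimits C] {N X R : C}
  {n : N ⟶ X} {r1 r2 : R ⟶ X}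

lemma comp_lift {nt : N ⨯ N ⟶ R}
    (h : IsPullback nt (𝟙 (N ⨯ N)) (prod.lift r1 r2) (prod.map n n)) :
    nt ≫ prod.lift r1 r2 = prod.map n n := by
  rw [h.w, Category.id_comp]

lemma comp_r2 {nt : N ⨯ N ⟶ R}
    (h : IsPullback nt (𝟙 (N ⨯ N)) (prod.lift r1 r2) (prod.map n n)) :
    nt ≫ r2 = prod.snd ≫ n := by
  rw [← prod.map_snd n n, ← comp_lift h, Category.assoc, prod.lift_snd]

lemma exists_related (hn : IsBournNormalTo n r1 r2) {T : C} (x y : T ⟶ N) :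
    ∃ a : T ⟶ R, a ≫ r1 = x ≫ n ∧ a ≫ r2 = y ≫ n := by
  obtain ⟨nt, h, h'⟩ := hn
  refine ⟨prod.lift x y ≫ nt, ?_, ?_⟩
  · rw [Category.assoc, h'.w, prod.lift_fst_assoc]
  · rw [Category.assoc, comp_r2 h, prod.lift_snd_assoc]

lemma exists_comp_eq_r2 (hn : IsBournNormalTo n r1 r2) {T : C} (a : T ⟶ R) (b : T ⟶ N)
    (hab : a ≫ r1 = b ≫ n) : ∃ c : T ⟶ N, c ≫ n = a ≫ r2 := by
  obtain ⟨nt, h, h'⟩ := hn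
  refine ⟨h'.lift a b hab ≫ prod.snd, ?_⟩
  rw [Category.assoc, ← comp_r2 h, h'.lift_fst_assoc]

lemma mono [Mono (prod.lift r1 r2)] (hn : IsBournNormalTo n r1 r2) : Mono n := by
  obtain ⟨nt, h, h'⟩ := hn
  refine ⟨fun {T} x y hxy => ?_⟩
  have hnt : prod.lift x y ≫ nt = prod.lift x x ≫ nt := by
    rw [← cancel_mono (prod.lift r1 r2), Category.assoc, Category.assoc, comp_lift h,
      prod.lift_map, prod.lift_map, hxy]
  have hpair : prod.lift x y = prod.lift x x :=
    h'.hom_ext hnt (by rw [prod.lift_fst, prod.lift_fst])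
  simpa only [prod.lift_snd] using (hpair =≫ prod.snd).symm

lemma factors_of_nullSupport [HasInitial C] {N' : C} {n' : N' ⟶ X}
    (hn : IsBournNormalTo n r1 r2) (hn' : IsBournNormalTo n' r1 r2) (ω : N ⟶ ⊥_ C) :
    ∃ f : N ⟶ N', f ≫ n' = n := by
  obtain ⟨a, ha1, ha2⟩ := hn.exists_related (ω ≫ initial.to N) (𝟙 N)
  obtain ⟨f, hf⟩ := hn'.exists_comp_eq_r2 a (ω ≫ initial.to N') (by simp [ha1])
  exact ⟨f, by rw [hf, ha2, Category.id_comp]⟩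

end IsBournNormalTo

theorem bournNormal_nullSupport_essentially_unique_general {C : Type u} [Category.{v} C]
    [HasFiniteLimits C] [HasInitial C]
    {N N' X : C} (E : InternalEqRel C X) (n : N ⟶ X) (n' : N' ⟶ X)
    (hn : IsBournNormalTo n E.r1 E.r2) (hn' : IsBournNormalTo n' E.r1 E.r2)
    (hns : Nonempty (N ⟶ ⊥_ C)) (hns' : Nonempty (N' ⟶ ⊥_ C)) :
    ∃ i : N ≅ N', i.hom ≫ n' = n := by
  have := E.rel_mono
  have := hn.mono
  have := hn'.mono
  obtain ⟨f, hf⟩ := hn.factors_of_nullSupport hn' hns.some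
  obtain ⟨g, hg⟩ := hn'.factors_of_nullSupport hn hns'.some
  have hsub : Subobject.mk n = Subobject.mk n' :=
    le_antisymm (Subobject.mk_le_mk_of_comm f hf) (Subobject.mk_le_mk_of_comm g hg)
  exact ⟨Subobject.isoOfMkEqMk n n' hsub, Subobject.ofMkLEMk_comp _⟩

/-- In a quasi-pointed finitely complete category, two morphisms with null-support domains
that are both Bourn-normal to the same equivalence relation are isomorphic as subobjects:
the Bourn-normal monomorphism with null-support domain associated to a given equivalence
relation is essentially unique. -/
theorem bournNormal_nullSupport_essentially_unique {C : Type u} [Category.{v} C]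
    [HasFiniteLimits C] [HasInitial C]
    (hqp : Mono (initial.to (⊤_ C)))
    {N N' X : C} (E : InternalEqRel C X) (n : N ⟶ X) (n' : N' ⟶ X)
    (hn : IsBournNormalTo n E.r1 E.r2) (hn' : IsBournNormalTo n' E.r1 E.r2)
    (hns : Nonempty (N ⟶ ⊥_ C)) (hns' : Nonempty (N' ⟶ ⊥_ C)) :
    ∃ i : N ≅ N', i.hom ≫ n' = n :=
  bournNormal_nullSupport_essentially_unique_general E n n' hn hn' hns hns'
end

section
/- Let C be a regular Mal'tsev protomodular category with pushouts of split monomorphisms along arbitrary morphisms. If the monomorphism n : N → X is Bourn-normal to an equivalence relation S, then the canonical comparison monomorphism ρ : Rel(n) → S is an isomorphism; hence the equivalence relation to which n is Bourn-normal is unique up to isomorphism. -/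
open CategoryTheory CategoryTheory.Limits

/-!
The comparison `ρ` is a morphism of points over `X`, from `(m ≫ fst, inr ≫ q)` to
`(S.r1, S.rfl')`, and it is a monomorphism because `m` is. By protomodularity it suffices that
its pullback along `n` be invertible. Bourn-normality presents the pullback of `S.r1` along `n`
as `N ⨯ N` with second projection `nt`, and `nt` factors through `ρ` via `inl ≫ q`; so the
pulled-back `ρ` is a split epimorphism, and, as a pullback of a monomorphism, an isomorphism.
-/

universe v u

namespace CategoryTheory.Limits

section PullbackMap

variable {C : Type u} [Category.{v} C] {A Z B B' : C}

theorem mono_pullback_map_of_mono (f : Z ⟶ A) {b : B ⟶ A} {b' : B' ⟶ A} {h : B ⟶ B'} [Mono h]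
    (hb : h ≫ b' = b) [HasPullback f b] [HasPullback f b'] :
    Mono (pullback.map f b f b' (𝟙 Z) h (𝟙 A) (by simp) (by rw [Category.comp_id, hb])) where
  right_cancellation u v huv := by
    apply pullback.hom_ext
    · simpa only [Category.assoc, pullback.lift_fst, Category.comp_id] using
        congrArg (· ≫ pullback.fst f b') huv
    · rw [← cancel_mono h]
      simpa only [Category.assoc, pullback.lift_snd] using congrArg (· ≫ pullback.snd f b') huv

theorem isIso_pullback_map_of_mono_of_fac (f : Z ⟶ A) {b : B ⟶ A} {b' : B' ⟶ A} {h : B ⟶ B'}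
    [Mono h] (hb : h ≫ b' = b) [HasPullback f b] [HasPullback f b'] (k : pullback f b' ⟶ B)
    (hk : k ≫ h = pullback.snd f b') :
    IsIso (pullback.map f b f b' (𝟙 Z) h (𝟙 A) (by simp) (by rw [Category.comp_id, hb])) :=
  have := mono_pullback_map_of_mono f hb
  have : IsSplitEpi (pullback.map f b f b' (𝟙 Z) h (𝟙 A) (by simp) (by rw [Category.comp_id, hb])) :=
    ⟨⟨⟨pullback.lift (pullback.fst f b') k (by rw [pullback.condition, ← hb, ← hk, Category.assoc]),
      pullback.hom_ext
        (by simp only [Category.assoc, pullback.lift_fst, Category.comp_id, Category.id_comp])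
        (by simp only [Category.assoc, pullback.lift_snd, pullback.lift_snd_assoc, hk,
          Category.id_comp])⟩⟩⟩
  isIso_of_mono_of_isSplitEpi _

end PullbackMap

end CategoryTheory.Limits

section PushoutDiag

variable {C : Type u} [Category.{v} C] [HasBinaryProducts C] {N X : C} (n : N ⟶ X)
  [HasPushout (diag N) n]

/-- The map `⟨d, c⟩ : n_!(∇N) ⟶ X ⨯ X` whose regular image is `Rel(n)`. -/
noncomputable def pushoutDiagLift : pushout (diag N) n ⟶ X ⨯ X :=
  prod.lift
    (pushout.desc (prod.fst ≫ n) (𝟙 X)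
      (by rw [← Category.assoc, prod.lift_fst, Category.id_comp, Category.comp_id]))
    (pushout.desc (prod.snd ≫ n) (𝟙 X)
      (by rw [← Category.assoc, prod.lift_snd, Category.id_comp, Category.comp_id]))

theorem inl_pushoutDiagLift : pushout.inl (diag N) n ≫ pushoutDiagLift n = prod.map n n := by
  ext <;> simp only [pushoutDiagLift, Category.assoc, prod.lift_fst, prod.lift_snd,
    pushout.inl_desc, prod.map_fst, prod.map_snd]

theorem inr_pushoutDiagLift : pushout.inr (diag N) n ≫ pushoutDiagLift n = diag X := by
  ext <;> simp only [pushoutDiagLift, Category.assoc, prod.lift_fst, prod.lift_snd,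
    pushout.inr_desc]

end PushoutDiag

/-- Let `C` be a regular Mal'tsev protomodular category with pushouts of split
monomorphisms along arbitrary morphisms.  If a monomorphism `n : N ⟶ X` is Bourn-normal
to an equivalence relation `S`, then the canonical comparison monomorphism
`ρ : Rel(n) ⟶ S` (over the identity of `X`) is an isomorphism; hence the equivalence
relation to which `n` is Bourn-normal is unique up to isomorphism.  Here
`Rel(n) = R(n_!(∇N)) = (M, m ≫ fst, m ≫ snd)` is constructed from the codiscrete relation
on `N` by pushing out its reflexivity section (the diagonal) along `n` and taking the
regular-epi/mono factorization `⟨d,c⟩ = q ≫ m`. -/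
theorem rel_comparison_isIso_of_protomodular {C : Type u} [Category.{v} C] [HasFiniteLimits C]
    {N X : C} (n : N ⟶ X) [HasPushout (diag N) n]
    -- the regular image factorization defining `Rel(n)`:
    (M : C) (q : pushout (diag N) n ⟶ M) (m : M ⟶ X ⨯ X)
    (hm : Mono m)
    (hfact : q ≫ m =
      prod.lift
        (pushout.desc (prod.fst ≫ n) (𝟙 X) (by rw [← Category.assoc, prod.lift_fst, Category.id_comp, Category.comp_id]))
        (pushout.desc (prod.snd ≫ n) (𝟙 X) (by rw [← Category.assoc, prod.lift_snd, Category.id_comp, Category.comp_id])))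
    -- `n` is Bourn-normal to some equivalence relation:
        -- `C` is protomodular: change of base along any morphism for the fibration of
    -- points reflects isomorphisms:
    (hproto : ∀ {A' C' B B' : C} (g : C' ⟶ A') (b : B ⟶ A') (s : A' ⟶ B)
      (b' : B' ⟶ A') (s' : A' ⟶ B') (h : B ⟶ B')
      (hs : s ≫ b = 𝟙 A') (hs' : s' ≫ b' = 𝟙 A')
      (hb : h ≫ b' = b) (hsh : s ≫ h = s'),
      IsIso (pullback.map g b g b' (𝟙 C') h (𝟙 A')
        (by simp) (by rw [Category.comp_id, hb])) → IsIso h)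
    (S : InternalEqRel C X) (hS : IsBournNormalTo n S.r1 S.r2) :
    ∀ ρ : M ⟶ S.R, ρ ≫ S.r1 = m ≫ prod.fst → ρ ≫ S.r2 = m ≫ prod.snd → IsIso ρ := by
  intro ρ hρ1 hρ2
  obtain ⟨nt, hnt, hnorm⟩ := hS
  have hRel : q ≫ m = pushoutDiagLift n := hfact
  have : Mono (prod.lift S.r1 S.r2) := S.rel_mono
  have hρm : ρ ≫ prod.lift S.r1 S.r2 = m := prod.hom_ext
    (by rw [Category.assoc, prod.lift_fst, hρ1]) (by rw [Category.assoc, prod.lift_snd, hρ2])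
  have : Mono ρ := mono_of_mono_fac hρm
  have hrfl : (pushout.inr _ _ ≫ q) ≫ ρ = S.rfl' := by
    rw [← cancel_mono (prod.lift S.r1 S.r2), Category.assoc, Category.assoc, hρm, hRel,
      inr_pushoutDiagLift, prod.comp_lift, S.rfl_r1, S.rfl_r2]
  have hinl : (pushout.inl _ _ ≫ q) ≫ ρ = nt := by
    rw [← cancel_mono (prod.lift S.r1 S.r2), Category.assoc, Category.assoc, hρm, hRel,
      inl_pushoutDiagLift, hnt.w, Category.id_comp]
  refine hproto n (m ≫ prod.fst) (pushout.inr (diag N) n ≫ q) S.r1 S.rfl' ρ ?_ S.rfl_r1 hρ1 hrfl ?_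
  · rw [Category.assoc, ← Category.assoc q, hRel, ← Category.assoc, inr_pushoutDiagLift,
      prod.lift_fst]
  · exact isIso_pullback_map_of_mono_of_fac n hρ1
      (hnorm.flip.isoPullback.inv ≫ (pushout.inl _ _ ≫ q))
      (by rw [Category.assoc, hinl, hnorm.flip.isoPullback_inv_snd])
end
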